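/- Let q = 2^m, let θ be the Frobenius automorphism x ↦ x² of F_q, and let P = Σ_{k=0}^{n−1} a_k X^k ∈ F_q[X;θ]. For β ∈ F_q, the remainder r of the right division of P by X − β in F_q[X;θ] satisfies r = P̃(β), where P̃ is the ordinary (commutative) polynomial P̃ = Σ_{k=0}^{n−1} a_k z^{2^k − 1} ∈ F_q[z]. -/

import Mathlib

/-!
Skew polynomial rings `F[X;θ]` of automorphism type: the additive group of
polynomials `∑ aᵢ Xⁱ` with coefficients written on the left, with multiplication
determined by the rule `X * a = θ(a) * X`.
-/

noncomputable section

/-- The skew polynomial ring `F[X;θ]`: formal polynomials `∑ aᵢ Xⁱ` (represented by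
their finitely supported coefficient functions) with the usual addition and with
multiplication twisted by the automorphism `θ`, so that `X * a = θ(a) * X`. -/
def SkewPoly (F : Type*) [Ring F] (_θ : RingAut F) : Type _ := ℕ →₀ F

namespace SkewPoly

variable {F : Type*} [Ring F] (θ : RingAut F)

instance : AddCommGroup (SkewPoly F θ) := inferInstanceAs (AddCommGroup (ℕ →₀ F))

private theorem aut_one_apply (x : F) : (1 : RingAut F) x = x := rfl
private theorem aut_mul_apply (f g : RingAut F) (x : F) : (f * g) x = f (g x) := rfl

/-- The skew (twisted) convolution product on coefficient functions:
`(∑ aᵢ Xⁱ) * (∑ bⱼ Xʲ) = ∑_{i,j} aᵢ θⁱ(bⱼ) X^{i+j}`. -/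
def mulF (p q : ℕ →₀ F) : ℕ →₀ F :=
  p.sum fun i a => q.sum fun j b => Finsupp.single (i + j) (a * (θ ^ i) b)

instance : Mul (SkewPoly F θ) := ⟨fun p q => mulF θ p q⟩

instance : One (SkewPoly F θ) := ⟨(Finsupp.single 0 1 : ℕ →₀ F)⟩

theorem mul_def (p q : SkewPoly F θ) :
    p * q = Finsupp.sum (α := ℕ) (M := F) p
      (fun i a => Finsupp.sum (α := ℕ) (M := F) q
        (fun j b => Finsupp.single (i + j) (a * (θ ^ i) b))) := rfl

private theorem zero_mulF (q : ℕ →₀ F) : mulF θ 0 q = 0 := by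
  simp [mulF]

private theorem mulF_zero (p : ℕ →₀ F) : mulF θ p 0 = 0 := by
  simp [mulF]

private theorem add_mulF (p p' q : ℕ →₀ F) :
    mulF θ (p + p') q = mulF θ p q + mulF θ p' q := by
  unfold mulF
  rw [Finsupp.sum_add_index] <;> simp [add_mul, Finsupp.sum_add]

private theorem mulF_add (p q q' : ℕ →₀ F) :
    mulF θ p (q + q') = mulF θ p q + mulF θ p q' := by
  unfold mulF
  rw [← Finsupp.sum_add]
  refine Finsupp.sum_congr fun i _ => ?_
  rw [Finsupp.sum_add_index] <;> simp [mul_add]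

private theorem single_mulF (i : ℕ) (a : F) (q : ℕ →₀ F) :
    mulF θ (Finsupp.single i a) q
      = q.sum fun j b => Finsupp.single (i + j) (a * (θ ^ i) b) := by
  unfold mulF
  rw [Finsupp.sum_single_index]
  simp

private theorem single_mulF_single (i j : ℕ) (a b : F) :
    mulF θ (Finsupp.single i a) (Finsupp.single j b)
      = Finsupp.single (i + j) (a * (θ ^ i) b) := by
  rw [single_mulF, Finsupp.sum_single_index]
  simp

private theorem mulF_assoc_sss (i j k : ℕ) (a b c : F) :
    mulF θ (mulF θ (Finsupp.single i a) (Finsupp.single j b)) (Finsupp.single k c)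
      = mulF θ (Finsupp.single i a) (mulF θ (Finsupp.single j b) (Finsupp.single k c)) := by
  simp only [single_mulF_single]
  rw [add_assoc, pow_add]
  simp [mul_assoc, aut_mul_apply]

private theorem mulF_assoc_ss (i j : ℕ) (a b : F) (r : ℕ →₀ F) :
    mulF θ (mulF θ (Finsupp.single i a) (Finsupp.single j b)) r
      = mulF θ (Finsupp.single i a) (mulF θ (Finsupp.single j b) r) := by
  induction r using Finsupp.induction with
  | zero => simp [mulF_zero]
  | single_add k c r _ _ ih =>
      rw [mulF_add, mulF_add, mulF_add, ih, mulF_assoc_sss]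

private theorem mulF_assoc_s (i : ℕ) (a : F) (q r : ℕ →₀ F) :
    mulF θ (mulF θ (Finsupp.single i a) q) r
      = mulF θ (Finsupp.single i a) (mulF θ q r) := by
  induction q using Finsupp.induction with
  | zero => simp [mulF_zero, zero_mulF]
  | single_add j b q _ _ ih =>
      rw [mulF_add, add_mulF, add_mulF, mulF_add, ih, mulF_assoc_ss]

private theorem mulF_assoc (p q r : ℕ →₀ F) :
    mulF θ (mulF θ p q) r = mulF θ p (mulF θ q r) := by
  induction p using Finsupp.induction with
  | zero => simp [zero_mulF]
  | single_add i a p _ _ ih =>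
      rw [add_mulF, add_mulF, add_mulF, ih, mulF_assoc_s]

instance instRing : Ring (SkewPoly F θ) :=
  { (inferInstance : AddCommGroup (ℕ →₀ F)), (inferInstance : Mul (SkewPoly F θ)),
    (inferInstance : One (SkewPoly F θ)) with
    mul_assoc := fun p q r => mulF_assoc θ p q r
    one_mul := fun p => by
      show mulF θ (Finsupp.single 0 1) p = p
      refine (single_mulF θ 0 1 p).trans ?_
      refine (Finsupp.sum_congr fun i a => ?_).trans (Finsupp.sum_single p)
      simp [aut_one_apply]
    mul_one := fun p => by
      show mulF θ p (Finsupp.single 0 1) = p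
      unfold mulF
      refine (Finsupp.sum_congr fun i a => ?_).trans (Finsupp.sum_single p)
      rw [Finsupp.sum_single_index] <;> simp
    left_distrib := fun p q r => mulF_add θ p q r
    right_distrib := fun p q r => add_mulF θ p q r
    zero_mul := fun p => zero_mulF θ p
    mul_zero := fun p => mulF_zero θ p }

/-- The constant (degree-zero) embedding `F → F[X;θ]`, as a ring homomorphism. -/
def C : F →+* SkewPoly F θ where
  toFun a := (Finsupp.single 0 a : ℕ →₀ F)
  map_one' := rfl
  map_mul' a b := by
    show _ = mulF θ _ _
    rw [single_mulF_single]
    simp [aut_one_apply]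
  map_zero' := by
    show (Finsupp.single 0 (0 : F) : ℕ →₀ F) = 0
    simp
  map_add' a b := by
    show (Finsupp.single 0 (a + b) : ℕ →₀ F) = Finsupp.single 0 a + Finsupp.single 0 b
    exact Finsupp.single_add _ _ _

/-- The indeterminate `X` of the skew polynomial ring. -/
def X : SkewPoly F θ := (Finsupp.single 1 1 : ℕ →₀ F)

/-- The `i`-th coefficient of a skew polynomial. -/
def coeff (p : SkewPoly F θ) (i : ℕ) : F := (show ℕ →₀ F from p) i

/-- Sanity check: the fundamental commutation rule `X * a = θ(a) * X`. -/
theorem X_mul_C (a : F) : X θ * C θ a = C θ (θ a) * X θ := by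
  show mulF θ (Finsupp.single 1 1) (Finsupp.single 0 a)
      = mulF θ (Finsupp.single 0 (θ a)) (Finsupp.single 1 1)
  rw [single_mulF_single, single_mulF_single]
  simp [aut_one_apply, pow_one]

end SkewPoly

private theorem skew_X_pow_rem {F : Type*} [Field F] (θ : RingAut F)
    (hθ : ∀ x : F, θ x = x ^ 2) (β : F) (k : ℕ) :
    ∃ Q : SkewPoly F θ,
      SkewPoly.X θ ^ k
        = Q * (SkewPoly.X θ - SkewPoly.C θ β) + SkewPoly.C θ (β ^ (2 ^ k - 1)) := by
  induction k with
  | zero =>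
      exact ⟨0, by simp⟩
  | succ k ih =>
      obtain ⟨Q, hQ⟩ := ih
      refine ⟨SkewPoly.X θ * Q + SkewPoly.C θ (θ (β ^ (2 ^ k - 1))), ?_⟩
      have hβ : θ (β ^ (2 ^ k - 1)) * β = β ^ (2 ^ (k + 1) - 1) := by
        rw [hθ, ← pow_mul, ← pow_succ]
        congr 1
        have h1 : 1 ≤ 2 ^ k := Nat.one_le_two_pow
        have : 2 ^ (k + 1) = 2 * 2 ^ k := by ring
        omega
      calc SkewPoly.X θ ^ (k + 1) = SkewPoly.X θ * SkewPoly.X θ ^ k := by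
            rw [pow_succ']
        _ = SkewPoly.X θ * (Q * (SkewPoly.X θ - SkewPoly.C θ β))
              + SkewPoly.X θ * SkewPoly.C θ (β ^ (2 ^ k - 1)) := by
            rw [hQ, mul_add]
        _ = SkewPoly.X θ * Q * (SkewPoly.X θ - SkewPoly.C θ β)
              + SkewPoly.C θ (θ (β ^ (2 ^ k - 1))) * SkewPoly.X θ := by
            rw [mul_assoc, SkewPoly.X_mul_C]
        _ = _ := by
            have : SkewPoly.C θ (θ (β ^ (2 ^ k - 1))) * SkewPoly.X θ
                = SkewPoly.C θ (θ (β ^ (2 ^ k - 1))) * (SkewPoly.X θ - SkewPoly.C θ β)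
                  + SkewPoly.C θ (θ (β ^ (2 ^ k - 1)) * β) := by
              rw [mul_sub, map_mul, sub_add_cancel]
            rw [this, hβ, add_mul, add_assoc]

/-- Let `F` be the field with `2^m` elements, `θ : x ↦ x²` the
Frobenius, and `P = ∑_{k<n} aₖ Xᵏ ∈ F[X;θ]`.  For `β ∈ F`, the remainder `r` of the
right division of `P` by `X - β` satisfies `r = P̃(β)` where
`P̃ = ∑_{k<n} aₖ z^{2ᵏ - 1}` is an ordinary commutative polynomial. -/
theorem remainder_eq_commutative_evaluation
    (F : Type*) [Field F] [Fintype F] (m : ℕ) (hm : 0 < m)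
    (hcard : Fintype.card F = 2 ^ m)
    (θ : RingAut F) (hθ : ∀ x : F, θ x = x ^ 2)
    (n : ℕ) (a : Fin n → F) (β : F) :
    ∃ Q : SkewPoly F θ,
      (∑ k : Fin n, SkewPoly.C θ (a k) * SkewPoly.X θ ^ (k : ℕ))
        = Q * (SkewPoly.X θ - SkewPoly.C θ β)
          + SkewPoly.C θ
              (Polynomial.eval β
                (∑ k : Fin n, Polynomial.C (a k) * Polynomial.X ^ (2 ^ (k : ℕ) - 1))) := by
  choose Q hQ using fun k : Fin n => skew_X_pow_rem θ hθ β (k : ℕ)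
  refine ⟨∑ k : Fin n, SkewPoly.C θ (a k) * Q k, ?_⟩
  have heval : Polynomial.eval β
      (∑ k : Fin n, Polynomial.C (a k) * Polynomial.X ^ (2 ^ (k : ℕ) - 1))
      = ∑ k : Fin n, a k * β ^ (2 ^ (k : ℕ) - 1) := by
    simp [Polynomial.eval_finset_sum]
  rw [heval, Finset.sum_mul, map_sum, ← Finset.sum_add_distrib]
  refine Finset.sum_congr rfl fun k _ => ?_
  rw [hQ k, mul_add, mul_assoc, ← map_mul]
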